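/- For a coherent casebase D in the regular AA-CBR_⪰ setting, a concise subset of D exists (constructed by processing cases in ⪯-order and keeping exactly the surprising ones); combined with uniqueness, there is exactly one concise D' ⊆ D w.r.t. D. -/
import Mathlib


namespace AACBR

/-- In an AF with arguments `args` and attack `att`, a set `E` defends argument `a`
iff every attacker of `a` (within `args`) is attacked by some element of `E`. -/
def defends {A : Type} (args : Set A) (att : A → A → Prop) (E : Set A) (a : A) : Prop :=
  ∀ b ∈ args, att b a → ∃ c ∈ E, att c b

/-- `G_0` is the set of unattacked arguments; `G_{i+1}` is the set of arguments
defended by `G_i`. -/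
def groundedSeq {A : Type} (args : Set A) (att : A → A → Prop) : ℕ → Set A
  | 0 => {a ∈ args | ∀ b ∈ args, ¬ att b a}
  | n + 1 => {a ∈ args | defends args att (groundedSeq args att n) a}

/-- The grounded extension `⋃ i, G_i`. -/
def grounded {A : Type} (args : Set A) (att : A → A → Prop) : Set A :=
  ⋃ i, groundedSeq args att i

variable {X : Type}

/-- Cases are pairs of a characterisation (in the partially ordered set `X`, where
`α ≤ β` reads "`α` is less specific than `β`") and one of the two outcomes
(modelled as `Bool`). Attack between labelled cases of the casebase `cb`
(which includes the default argument): `a` attacks `b` iff their outcomes differ,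
`a` is at least as specific as `b`, and no case of `cb` with the same outcome as
`a` is strictly in between. -/
def cbAtt [PartialOrder X] (cb : Set (X × Bool)) (a b : X × Bool) : Prop :=
  a ∈ cb ∧ b ∈ cb ∧ a.2 ≠ b.2 ∧ b.1 ≤ a.1 ∧
    ¬ ∃ g ∈ cb, g.2 = a.2 ∧ b.1 < g.1 ∧ g.1 < a.1

/-- The arguments of the AF mined from casebase `D`, default argument `(dC, dO)`
and a new case: `none` is the new-case argument, `some c` the labelled cases. -/
def minedArgs (D : Set (X × Bool)) (dC : X) (dO : Bool) : Set (Option (X × Bool)) :=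
  insert none (Option.some '' insert (dC, dO) D)

/-- The attack relation of the (regular) AF mined from `D`, default `(dC, dO)` and
new case `N`: labelled cases attack each other as in `cbAtt`, and the new-case
argument attacks exactly the labelled cases `b` that are irrelevant to it,
i.e. with `¬ b.1 ≤ N`. -/
def minedAtt [PartialOrder X] (D : Set (X × Bool)) (dC : X) (dO : Bool) (N : X) :
    Option (X × Bool) → Option (X × Bool) → Prop
  | some a, some b => cbAtt (insert (dC, dO) D) a b
  | none, some b => b ∈ insert (dC, dO) D ∧ ¬ b.1 ≤ N
  | _, none => False

/-- The grounded extension of the AF mined from `D` and new case `N`. -/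
def minedGrounded [PartialOrder X] (D : Set (X × Bool)) (dC : X) (dO : Bool) (N : X) :
    Set (Option (X × Bool)) :=
  grounded (minedArgs D dC dO) (minedAtt D dC dO N)

open Classical in
/-- The AA-CBR_⪰ prediction for `N`: the default outcome `dO` if the default
argument is in the grounded extension, and the other outcome otherwise. -/
noncomputable def predict [PartialOrder X] (D : Set (X × Bool)) (dC : X) (dO : Bool)
    (N : X) : Bool :=
  if some (dC, dO) ∈ minedGrounded D dC dO N then dO else !dO

/-- A casebase is coherent if no characterisation occurs with two outcomes. -/
def coherent (D : Set (X × Bool)) : Prop :=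
  ∀ a ∈ D, ∀ b ∈ D, a.1 = b.1 → a.2 = b.2

/-- A case `a ∈ D` is nearest to `N` iff `a.1 ⪯ N`, maximally so. -/
def nearest [PartialOrder X] (D : Set (X × Bool)) (N : X) (a : X × Bool) : Prop :=
  a ∈ D ∧ a.1 ≤ N ∧ ¬ ∃ b ∈ D, a.1 < b.1 ∧ b.1 ≤ N

end AACBR

namespace AACBR

variable {X : Type}

/-- An example `p` is surprising w.r.t. a casebase `S` iff the AA-CBR_⪰
prediction for its characterisation from `S \ {p}` differs from its outcome. -/
def surprising [PartialOrder X] (dC : X) (dO : Bool) (S : Set (X × Bool))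
    (p : X × Bool) : Prop :=
  predict (S \ {p}) dC dO p.1 ≠ p.2

/-- `D'` is concise w.r.t. `D` iff `D' ⊆ D` and `D'` equals the set of examples
of `D` that are surprising w.r.t. `D'`. -/
def conciseWrt [PartialOrder X] (dC : X) (dO : Bool) (D D' : Set (X × Bool)) : Prop :=
  D' ⊆ D ∧ D' = {p ∈ D | surprising dC dO D' p}

end AACBR

namespace AACBR

section Locality

variable {X : Type} [PartialOrder X]

lemma mem_args_some {S : Set (X × Bool)} {dC : X} {dO : Bool} {b : X × Bool} :
    some b ∈ minedArgs S dC dO ↔ b ∈ insert (dC, dO) S := by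
  simp [minedArgs]

lemma none_mem_args {S : Set (X × Bool)} {dC : X} {dO : Bool} :
    (none : Option (X × Bool)) ∈ minedArgs S dC dO := Set.mem_insert _ _

lemma att_none (S : Set (X × Bool)) (dC : X) (dO : Bool) (N : X) (c : Option (X × Bool)) :
    ¬ minedAtt S dC dO N c none := by cases c <;> simp [minedAtt]

lemma gs_subset_args {A : Type} (args : Set A) (att : A → A → Prop) (n : ℕ) :
    groundedSeq args att n ⊆ args := by
  cases n <;> exact fun a ha => ha.1

lemma none_mem_gs (S : Set (X × Bool)) (dC : X) (dO : Bool) (N : X) (n : ℕ) :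
    (none : Option (X × Bool)) ∈ groundedSeq (minedArgs S dC dO) (minedAtt S dC dO N) n := by
  cases n with
  | zero => exact ⟨none_mem_args, fun b _ h => att_none _ _ _ _ _ h⟩
  | succ n => exact ⟨none_mem_args, fun b _ h => absurd h (att_none _ _ _ _ _)⟩

lemma irrel_not_mem_gs {S : Set (X × Bool)} {dC : X} {dO : Bool} {N : X} {n : ℕ}
    {b : X × Bool} (hb : ¬ b.1 ≤ N) :
    some b ∉ groundedSeq (minedArgs S dC dO) (minedAtt S dC dO N) n := by
  intro h
  have hcb : b ∈ insert (dC, dO) S := mem_args_some.mp (gs_subset_args _ _ _ h)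
  have hatt : minedAtt S dC dO N none (some b) := ⟨hcb, hb⟩
  cases n with
  | zero => exact h.2 none none_mem_args hatt
  | succ n =>
      obtain ⟨c, _, hcatt⟩ := h.2 none none_mem_args hatt
      exact att_none _ _ _ _ _ hcatt

variable {S : Set (X × Bool)} {dC : X} {dO : Bool} {N : X}

/-- membership in the restricted casebase, for relevant cases -/
lemma cb_rel_iff (hdC : dC ≤ N) {q : X × Bool} (hq : q.1 ≤ N) :
    q ∈ insert (dC, dO) S ↔ q ∈ insert (dC, dO) {r ∈ S | r.1 ≤ N} := by
  constructor
  · rintro (h | h)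
    · exact Or.inl h
    · exact Or.inr ⟨h, hq⟩
  · rintro (h | h)
    · exact Or.inl h
    · exact Or.inr h.1

lemma cb_rel_mem (hdC : dC ≤ N) {q : X × Bool}
    (hq : q ∈ insert (dC, dO) {r ∈ S | r.1 ≤ N}) : q.1 ≤ N := by
  rcases hq with h | h
  · rw [h]; exact hdC
  · exact h.2

lemma cbAtt_rel_iff (hdC : dC ≤ N) {a b : X × Bool} (ha : a.1 ≤ N) (hb : b.1 ≤ N) :
    cbAtt (insert (dC, dO) S) a b ↔ cbAtt (insert (dC, dO) {r ∈ S | r.1 ≤ N}) a b := by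
  unfold cbAtt
  rw [← cb_rel_iff hdC ha, ← cb_rel_iff hdC hb]
  refine and_congr_right fun _ => and_congr_right fun _ => and_congr_right fun _ =>
    and_congr_right fun hba => not_congr ?_
  constructor
  · rintro ⟨g, hg, h1, h2, h3⟩
    exact ⟨g, (cb_rel_iff hdC (le_trans (le_of_lt h3) ha)).mp hg, h1, h2, h3⟩
  · rintro ⟨g, hg, h1, h2, h3⟩
    exact ⟨g, (cb_rel_iff hdC (le_trans (le_of_lt h3) ha)).mpr hg, h1, h2, h3⟩

/-- main induction relating grounded sequences of full and restricted AFs -/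
lemma gs_rel_iff (hdC : dC ≤ N) : ∀ n : ℕ,
    (∀ b : X × Bool, b.1 ≤ N →
      some b ∈ groundedSeq (minedArgs S dC dO) (minedAtt S dC dO N) n →
      some b ∈ groundedSeq (minedArgs {r ∈ S | r.1 ≤ N} dC dO)
        (minedAtt {r ∈ S | r.1 ≤ N} dC dO N) n) ∧
    (∀ b : X × Bool, b.1 ≤ N →
      some b ∈ groundedSeq (minedArgs {r ∈ S | r.1 ≤ N} dC dO)
        (minedAtt {r ∈ S | r.1 ≤ N} dC dO N) n →
      some b ∈ groundedSeq (minedArgs S dC dO) (minedAtt S dC dO N) (n + 1)) := by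
  intro n
  induction n with
  | zero =>
    constructor
    · rintro b hb ⟨hargs, hun⟩
      refine ⟨mem_args_some.mpr ((cb_rel_iff hdC hb).mp (mem_args_some.mp hargs)), ?_⟩
      rintro (_ | q) hq hatt
      · exact hatt.2 hb
      · have hqrel : q.1 ≤ N := cb_rel_mem hdC (mem_args_some.mp hq)
        have : cbAtt (insert (dC, dO) S) q b := (cbAtt_rel_iff hdC hqrel hb).mpr hatt
        exact hun (some q) (mem_args_some.mpr this.1) this
    · rintro b hb ⟨hargs, hun⟩
      refine ⟨mem_args_some.mpr ((cb_rel_iff hdC hb).mpr (mem_args_some.mp hargs)), ?_⟩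
      rintro (_ | q) hq hatt
      · exact absurd hb hatt.2
      · by_cases hqrel : q.1 ≤ N
        · exact absurd ((cbAtt_rel_iff hdC hqrel hb).mp hatt)
            (hun (some q) (mem_args_some.mpr ((cb_rel_iff hdC hqrel).mp hatt.1)) ·)
        · exact ⟨none, none_mem_gs S dC dO N 0, hatt.1, hqrel⟩
  | succ n ih =>
    constructor
    · rintro b hb ⟨hargs, hdef⟩
      refine ⟨mem_args_some.mpr ((cb_rel_iff hdC hb).mp (mem_args_some.mp hargs)), ?_⟩
      rintro (_ | q) hq hatt
      · exact absurd hb hatt.2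
      · have hqrel : q.1 ≤ N := cb_rel_mem hdC (mem_args_some.mp hq)
        have hattS : cbAtt (insert (dC, dO) S) q b := (cbAtt_rel_iff hdC hqrel hb).mpr hatt
        obtain ⟨c, hc, hcatt⟩ := hdef (some q) (mem_args_some.mpr hattS.1) hattS
        match c with
        | none => exact absurd hcatt.2 (not_not.mpr hqrel)
        | some r =>
          have hrrel : r.1 ≤ N := by
            by_contra hr
            exact irrel_not_mem_gs hr hc
          exact ⟨some r, ih.1 r hrrel hc, (cbAtt_rel_iff hdC hrrel hqrel).mp hcatt⟩
    · rintro b hb ⟨hargs, hdef⟩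
      refine ⟨mem_args_some.mpr ((cb_rel_iff hdC hb).mpr (mem_args_some.mp hargs)), ?_⟩
      rintro (_ | q) hq hatt
      · exact absurd hb hatt.2
      · by_cases hqrel : q.1 ≤ N
        · have hattT : cbAtt (insert (dC, dO) {r ∈ S | r.1 ≤ N}) q b :=
            (cbAtt_rel_iff hdC hqrel hb).mp hatt
          obtain ⟨c, hc, hcatt⟩ := hdef (some q) (mem_args_some.mpr hattT.1) hattT
          match c with
          | none => exact absurd hcatt.2 (not_not.mpr hqrel)
          | some r =>
            have hrrel : r.1 ≤ N := cb_rel_mem hdC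
              (mem_args_some.mp (gs_subset_args _ _ _ hc))
            exact ⟨some r, ih.2 r hrrel hc, (cbAtt_rel_iff hdC hrrel hqrel).mpr hcatt⟩
        · exact ⟨none, none_mem_gs S dC dO N (n + 1), hatt.1, hqrel⟩

lemma predict_local (S : Set (X × Bool)) (dC : X) (dO : Bool) (N : X) (hdC : dC ≤ N) :
    predict S dC dO N = predict {r ∈ S | r.1 ≤ N} dC dO N := by
  have key : some (dC, dO) ∈ minedGrounded S dC dO N ↔
      some (dC, dO) ∈ minedGrounded {r ∈ S | r.1 ≤ N} dC dO N := by
    unfold minedGrounded grounded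
    simp only [Set.mem_iUnion]
    constructor
    · rintro ⟨n, hn⟩
      exact ⟨n, (gs_rel_iff hdC n).1 (dC, dO) hdC hn⟩
    · rintro ⟨n, hn⟩
      exact ⟨n + 1, (gs_rel_iff hdC n).2 (dC, dO) hdC hn⟩
  unfold predict
  by_cases h : some (dC, dO) ∈ minedGrounded S dC dO N
  · rw [if_pos h, if_pos (key.mp h)]
  · rw [if_neg h, if_neg (fun h' => h (key.mpr h'))]

end Locality
section Construction

variable {X : Type} [PartialOrder X]

/-- Surprisingness of `p` only depends on the strictly-smaller part of the casebase. -/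
lemma surprising_local {D S : Set (X × Bool)} {dC : X} {dO : Bool} {p : X × Bool}
    (hcoh : coherent D) (hS : S ⊆ D) (hp : p ∈ D) (hleast : ∀ x : X, dC ≤ x) :
    (surprising dC dO S p ↔ surprising dC dO {q ∈ S | q.1 < p.1} p) := by
  unfold surprising
  have h1 : predict (S \ {p}) dC dO p.1 = predict ((S \ {p}) ∩ {q | q.1 ≤ p.1}) dC dO p.1 :=
    predict_local _ _ _ _ (hleast p.1)
  have h2 : predict ({q ∈ S | q.1 < p.1} \ {p}) dC dO p.1 =
      predict (({q ∈ S | q.1 < p.1} \ {p}) ∩ {q | q.1 ≤ p.1}) dC dO p.1 :=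
    predict_local _ _ _ _ (hleast p.1)
  have hsets : (S \ {p}) ∩ {q | q.1 ≤ p.1} = ({q ∈ S | q.1 < p.1} \ {p}) ∩ {q | q.1 ≤ p.1} := by
    ext q
    simp only [Set.mem_inter_iff, Set.mem_diff, Set.mem_setOf_eq, Set.mem_singleton_iff]
    constructor
    · rintro ⟨⟨hqS, hqp⟩, hle⟩
      refine ⟨⟨⟨hqS, lt_of_le_of_ne hle ?_⟩, hqp⟩, hle⟩
      intro heq
      exact hqp (Prod.ext heq (hcoh q (hS hqS) p hp heq))
    · rintro ⟨⟨⟨hqS, _⟩, hqp⟩, hle⟩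
      exact ⟨⟨hqS, hqp⟩, hle⟩
  rw [h1, h2, hsets]

/-- The inductive construction of the concise subset, by layers of the measure `m`. -/
noncomputable def chain (dC : X) (dO : Bool) (D : Set (X × Bool)) (m : X × Bool → ℕ) :
    ℕ → Set (X × Bool)
  | n => {p | p ∈ D ∧ ∃ _h : m p < n, surprising dC dO (chain dC dO D m (m p)) p}
termination_by n => n
decreasing_by exact _h

lemma chain_mem_iff (dC : X) (dO : Bool) (D : Set (X × Bool)) (m : X × Bool → ℕ)
    (n : ℕ) (p : X × Bool) :
    p ∈ chain dC dO D m n ↔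
      p ∈ D ∧ m p < n ∧ surprising dC dO (chain dC dO D m (m p)) p := by
  rw [chain]
  simp only [Set.mem_setOf_eq, exists_prop]

end Construction
/-- Existence (and, combined with uniqueness, unique existence) of a concise
subset: for a coherent casebase `D` in the regular AA-CBR_⪰ setting, there is
exactly one concise `D' ⊆ D` w.r.t. `D`. -/
theorem concise_exists_unique {X : Type} [PartialOrder X]
    (D : Set (X × Bool)) (hfin : D.Finite) (hcoh : coherent D)
    (dC : X) (dO : Bool) (hleast : ∀ x : X, dC ≤ x) :
    ∃! D' : Set (X × Bool), conciseWrt dC dO D D' := by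
  classical
  set m : X × Bool → ℕ := fun p => (hfin.toFinset.filter fun q => q.1 < p.1).card with hm_def
  have hm : ∀ p ∈ D, ∀ q ∈ D, q.1 < p.1 → m q < m p := by
    intro p hp q hq hqp
    apply Finset.card_lt_card
    constructor
    · intro r hr
      simp only [Finset.mem_filter, Set.Finite.mem_toFinset] at hr ⊢
      exact ⟨hr.1, lt_trans hr.2 hqp⟩
    · intro hsub
      have : q ∈ hfin.toFinset.filter fun r => r.1 < p.1 := by
        simp only [Finset.mem_filter, Set.Finite.mem_toFinset]
        exact ⟨hq, hqp⟩
      have := hsub this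
      simp only [Finset.mem_filter, Set.Finite.mem_toFinset] at this
      exact lt_irrefl _ this.2
  set D' : Set (X × Bool) :=
    {p | p ∈ D ∧ surprising dC dO (chain dC dO D m (m p)) p} with hD'_def
  have hchain_sub : ∀ n, chain dC dO D m n ⊆ D := by
    intro n q hq
    exact ((chain_mem_iff dC dO D m n q).mp hq).1
  have hchainD' : ∀ n q, q ∈ chain dC dO D m n ↔ q ∈ D' ∧ m q < n := by
    intro n q
    rw [chain_mem_iff]
    constructor
    · rintro ⟨h1, h2, h3⟩; exact ⟨⟨h1, h3⟩, h2⟩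
    · rintro ⟨⟨h1, h3⟩, h2⟩; exact ⟨h1, h2, h3⟩
  have hD'sub : D' ⊆ D := fun p hp => hp.1
  have hbelow : ∀ p ∈ D, {q ∈ chain dC dO D m (m p) | q.1 < p.1} = {q ∈ D' | q.1 < p.1} := by
    intro p hp
    ext q
    simp only [Set.mem_setOf_eq]
    constructor
    · rintro ⟨hq, hlt⟩
      exact ⟨((hchainD' _ _).mp hq).1, hlt⟩
    · rintro ⟨hq, hlt⟩
      exact ⟨(hchainD' _ _).mpr ⟨hq, hm p hp q (hD'sub hq) hlt⟩, hlt⟩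
  have hsur : ∀ p ∈ D,
      (surprising dC dO (chain dC dO D m (m p)) p ↔ surprising dC dO D' p) := by
    intro p hp
    rw [surprising_local hcoh (hchain_sub (m p)) hp hleast, hbelow p hp,
      ← surprising_local hcoh hD'sub hp hleast]
  have hconc : conciseWrt dC dO D D' := by
    refine ⟨hD'sub, ?_⟩
    ext p
    simp only [hD'_def, Set.mem_setOf_eq]
    constructor
    · rintro ⟨hp, hs⟩
      exact ⟨hp, (hsur p hp).mp hs⟩
    · rintro ⟨hp, hs⟩
      exact ⟨hp, (hsur p hp).mpr hs⟩
  refine ⟨D', hconc, ?_⟩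
  -- uniqueness
  intro E hE
  have key : ∀ n : ℕ, ∀ p : X × Bool, m p < n → (p ∈ E ↔ p ∈ D') := by
    intro n
    induction n with
    | zero => intro p hp; omega
    | succ n ih =>
      intro p hp
      by_cases hpD : p ∈ D
      · have hbe : {q ∈ E | q.1 < p.1} = {q ∈ D' | q.1 < p.1} := by
          ext q
          simp only [Set.mem_setOf_eq]
          constructor
          · rintro ⟨hq, hlt⟩
            exact ⟨(ih q (lt_of_lt_of_le (hm p hpD q (hE.1 hq) hlt) (Nat.lt_succ_iff.mp hp))).mp
              hq, hlt⟩
          · rintro ⟨hq, hlt⟩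
            exact ⟨(ih q (lt_of_lt_of_le (hm p hpD q (hD'sub hq) hlt) (Nat.lt_succ_iff.mp hp))).mpr
              hq, hlt⟩
        have hEmem : p ∈ E ↔ surprising dC dO E p := by
          conv_lhs => rw [hE.2]
          simp only [Set.mem_setOf_eq]
          exact ⟨fun h => h.2, fun h => ⟨hpD, h⟩⟩
        have hD'mem : p ∈ D' ↔ surprising dC dO D' p := by
          conv_lhs => rw [hconc.2]
          simp only [Set.mem_setOf_eq]
          exact ⟨fun h => h.2, fun h => ⟨hpD, h⟩⟩
        rw [hEmem, hD'mem, surprising_local hcoh hE.1 hpD hleast,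
          surprising_local hcoh hD'sub hpD hleast, hbe]
      · constructor
        · intro h; exact absurd (hE.1 h) hpD
        · intro h; exact absurd (hD'sub h) hpD
  ext p
  exact key (m p + 1) p (Nat.lt_succ_self _)

end AACBR
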